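/- arXiv:2510.03929 — 2 statements merged into one kernel-verified Lean document; each statement's English description precedes it below -/
import Mathlib

section
/- Total rejection probability of a speculative sampling step: Let S be a finite nonempty type and let p, q : S → ℝ be probability mass functions on S (p x ≥ 0, q x ≥ 0 for all x, and ∑_x p x = ∑_x q x = 1). Then ∑_{x ∈ S} p x * (1 − min(1, q x / p x)) = ∑_{x ∈ S} max(0, q x − p x), where real division by zero is taken to equal zero. -/
/-!
Accepting `x` with probability `min 1 (q x / p x)` accepts it with joint probability
`min (p x) (q x)`, so the rejection probability is `1 - ∑ min p q`. Since both `p` and `q` have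
mass `1`, this is `∑ (q - min p q) = ∑ max 0 (q - p)`.
-/

open Finset

theorem mul_min_one_div {K : Type*} [Field K] [LinearOrder K] [IsStrictOrderedRing K]
    {a b : K} (ha : 0 ≤ a) (hb : 0 ≤ b) : a * min 1 (b / a) = min a b := by
  rcases ha.eq_or_lt with rfl | ha
  · simp [hb]
  · rw [mul_min_of_nonneg _ _ ha.le, mul_one, mul_div_cancel₀ _ ha.ne']

theorem speculative_total_rejection_prob_general {S : Type*} [Fintype S]
    (p q : S → ℝ) (hp : ∀ x, 0 ≤ p x) (hq : ∀ x, 0 ≤ q x)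
    (hpsum : ∑ x, p x = 1) (hqsum : ∑ x, q x = 1) :
    ∑ x, p x * (1 - min 1 (q x / p x)) = ∑ x, max 0 (q x - p x) := by
  calc ∑ x, p x * (1 - min 1 (q x / p x))
      = ∑ x, (p x - min (p x) (q x)) := by
        simp only [mul_sub, mul_one, mul_min_one_div (hp _) (hq _)]
    _ = ∑ x, (q x - min (p x) (q x)) := by
        rw [sum_sub_distrib, sum_sub_distrib, hpsum, hqsum]
    _ = ∑ x, max 0 (q x - p x) := by
        simp only [← max_sub_sub_left, sub_self, max_comm]

/-- Total rejection probability of a speculative sampling step. -/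
theorem speculative_total_rejection_prob {S : Type*} [Fintype S] [Nonempty S]
    (p q : S → ℝ) (hp : ∀ x, 0 ≤ p x) (hq : ∀ x, 0 ≤ q x)
    (hpsum : ∑ x, p x = 1) (hqsum : ∑ x, q x = 1) :
    ∑ x, p x * (1 - min 1 (q x / p x)) = ∑ x, max 0 (q x - p x) :=
  speculative_total_rejection_prob_general p q hp hq hpsum hqsum
end

section
/- Reject-case joint law of a speculative sampling step (Lemma A.1, reject part): Let S be a finite nonempty type and let p, q : S → ℝ be probability mass functions on S with p ≠ q. Set R = ∑_{z ∈ S} p z * (1 − min(1, q z / p z)) (the total rejection probability) and Z = ∑_{z ∈ S} max(0, q z − p z). Then for every x ∈ S, R * (max(0, q x − p x) / Z) = max(0, q x − p x), where real division by zero is taken to equal zero. -/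
/-!
The rejection mass at `z` is `p z - min (p z) (q z) = max 0 (p z - q z)`, so the total rejection
probability is `∑ (p - q)⁺`, which equals `Z = ∑ (q - p)⁺` because `p` and `q` have the same total
mass. The claim is then `Z * (a / Z) = a` for the summand `a = (q x - p x)⁺` of `Z`, which also
holds when `Z = 0`, since then every summand vanishes.
-/

open Finset

theorem mul_one_sub_min_one_div {α : Type*} [Field α] [LinearOrder α] [IsStrictOrderedRing α]
    {a b : α} (ha : 0 ≤ a) (hb : 0 ≤ b) :
    a * (1 - min 1 (b / a)) = max 0 (a - b) := by
  rcases ha.eq_or_lt with rfl | ha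
  · simp [hb]
  rw [mul_sub, mul_one, mul_min_of_nonneg _ _ ha.le, mul_one, mul_div_cancel₀ _ ha.ne',
    ← max_sub_sub_left, sub_self]

theorem Finset.sum_max_zero_sub_comm {ι α : Type*} [AddCommGroup α] [LinearOrder α]
    [IsOrderedAddMonoid α] (s : Finset ι) {f g : ι → α}
    (h : ∑ i ∈ s, f i = ∑ i ∈ s, g i) :
    ∑ i ∈ s, max 0 (f i - g i) = ∑ i ∈ s, max 0 (g i - f i) := by
  have hpart : ∀ i, max 0 (f i - g i) - max 0 (g i - f i) = f i - g i := fun i => by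
    simpa [max_comm] using max_zero_sub_max_neg_zero_eq_self (f i - g i)
  rw [← sub_eq_zero, ← sum_sub_distrib, sum_congr rfl fun i _ => hpart i, sum_sub_distrib, h,
    sub_self]

theorem Finset.sum_mul_div_sum_of_nonneg {ι α : Type*} [Semifield α] [LinearOrder α]
    [IsOrderedRing α] {s : Finset ι} {f : ι → α} (hf : ∀ i ∈ s, 0 ≤ f i) {x : ι} (hx : x ∈ s) :
    (∑ i ∈ s, f i) * (f x / ∑ i ∈ s, f i) = f x :=
  mul_div_cancel_of_imp' fun h => (sum_eq_zero_iff_of_nonneg hf).1 h x hx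

theorem speculative_reject_joint_law_general {S : Type*} [Fintype S]
    (p q : S → ℝ) (hp : ∀ x, 0 ≤ p x) (hq : ∀ x, 0 ≤ q x)
    (hpsum : ∑ x, p x = 1) (hqsum : ∑ x, q x = 1) (x : S) :
    (∑ z, p z * (1 - min 1 (q z / p z))) *
        (max 0 (q x - p x) / ∑ z, max 0 (q z - p z)) =
      max 0 (q x - p x) := by
  have hreject : ∑ z, p z * (1 - min 1 (q z / p z)) = ∑ z, max 0 (q z - p z) := by
    simp_rw [mul_one_sub_min_one_div (hp _) (hq _)]
    exact sum_max_zero_sub_comm _ (hpsum.trans hqsum.symm)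
  rw [hreject]
  exact sum_mul_div_sum_of_nonneg (fun z _ => le_max_left _ _) (mem_univ x)

/-- Reject-case joint law of a speculative sampling step (Lemma A.1, reject part). -/
theorem speculative_reject_joint_law {S : Type*} [Fintype S] [Nonempty S]
    (p q : S → ℝ) (hp : ∀ x, 0 ≤ p x) (hq : ∀ x, 0 ≤ q x)
    (hpsum : ∑ x, p x = 1) (hqsum : ∑ x, q x = 1) (hpq : p ≠ q) (x : S) :
    (∑ z, p z * (1 - min 1 (q z / p z))) *
        (max 0 (q x - p x) / ∑ z, max 0 (q z - p z)) =
      max 0 (q x - p x) :=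
  speculative_reject_joint_law_general p q hp hq hpsum hqsum x
end
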